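/- A Σ_c-argumentative boolean state over (A, R) satisfies no exogenous trigger condition: for all x, y, (i) NOT (i_x ∧ (y attacks x) ∧ ¬o_y) [Δ¹ untriggered], (ii) NOT (¬o_x ∧ (y attacks x) ∧ i_y) [Δ² untriggered], (iii) NOT (o_x ∧ ∀ y attacking x, ¬i_y) [I¹ untriggered], (iv) NOT (¬i_x ∧ ∀ y attacking x, o_y) [I² untriggered]; and conversely, any boolean state with never i_x ∧ o_x in which none of these four conditions holds for any x, y is a Σ_c-argumentative state. -/
import Mathlib


namespace AAF17

def argState {A : Type*} (R : A → A → Prop) (i o : A → Prop) : Prop :=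
  ∀ x, ((i x ∧ ¬ o x) ↔ ∀ y, R y x → (¬ i y ∧ o y)) ∧
       ((¬ i x ∧ o x) ↔ ∃ y, R y x ∧ i y ∧ ¬ o y)

theorem argState_iff_no_trigger
    {A : Type*} [Fintype A] (R : A → A → Prop) (i o : A → Prop)
    (hcoher : ∀ x, ¬ (i x ∧ o x)) :
    argState R i o ↔
      ∀ x, (∀ y, ¬ (i x ∧ R y x ∧ ¬ o y)) ∧
           (∀ y, ¬ (¬ o x ∧ R y x ∧ i y)) ∧
           ¬ (o x ∧ ∀ y, R y x → ¬ i y) ∧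
           ¬ (¬ i x ∧ ∀ y, R y x → o y) := by
  classical
  constructor
  · intro h x
    obtain ⟨h1, h2⟩ := h x
    refine ⟨?_, ?_, ?_, ?_⟩
    · rintro y ⟨hix, hR, hoy⟩
      have hox : ¬ o x := fun ho => hcoher x ⟨hix, ho⟩
      exact hoy ((h1.mp ⟨hix, hox⟩) y hR).2
    · rintro y ⟨hox, hR, hiy⟩
      have hoy : ¬ o y := fun ho => hcoher y ⟨hiy, ho⟩
      exact hox (h2.mpr ⟨y, hR, hiy, hoy⟩).2
    · rintro ⟨hox, hall⟩
      have hix : ¬ i x := fun hi => hcoher x ⟨hi, hox⟩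
      obtain ⟨y, hR, hiy, _⟩ := h2.mp ⟨hix, hox⟩
      exact hall y hR hiy
    · rintro ⟨hix, hall⟩
      exact hix (h1.mpr (fun y hR => ⟨fun hi => hcoher y ⟨hi, hall y hR⟩, hall y hR⟩)).1
  · intro h x
    obtain ⟨t1, t2, t3, t4⟩ := h x
    constructor
    · constructor
      · rintro ⟨hix, hox⟩ y hR
        have hoy : o y := by
          by_contra hoy
          exact t1 y ⟨hix, hR, hoy⟩
        exact ⟨fun hi => hcoher y ⟨hi, hoy⟩, hoy⟩
      · intro hall
        have hox : ¬ o x := fun ho => t3 ⟨ho, fun y hR => (hall y hR).1⟩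
        have hix : i x := by
          by_contra hix
          exact t4 ⟨hix, fun y hR => (hall y hR).2⟩
        exact ⟨hix, hox⟩
    · constructor
      · rintro ⟨hix, hox⟩
        by_contra hne
        push_neg at hne
        exact t3 ⟨hox, fun y hR hiy => hcoher y ⟨hiy, hne y hR hiy⟩⟩
      · rintro ⟨y, hR, hiy, hoy⟩
        have hox : o x := by
          by_contra hox
          exact t2 y ⟨hox, hR, hiy⟩
        exact ⟨fun hi => hcoher x ⟨hi, hox⟩, hox⟩

end AAF17
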